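/- Let F be a field and let S, P be disjoint finite sets with pairwise disjoint copies S′, S″, P′, P″. Suppose V₁ ⊆ F_{S′∪P′∪S″∪P″} is an ideal transformer with respect to the copies S′∪P′ and S″∪P″ (i.e. V₁ = U ⊕ (U^⊥)_{S″P″} for some subspace U ⊆ F_{S′∪P′}, where (U^⊥)_{S″P″} is the copy of U^⊥ on S″∪P″), and V₂ ⊆ F_{S′∪S″} is an ideal transformer with respect to the copies S′ and S″. Then the matched composition V₁ ↔ V₂ (over the shared index set S′∪S″, a subspace of F_{P′∪P″}) is an ideal transformer with respect to the copies P′ and P″. -/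

import Mathlib

/-!
Write `V₁ = U₁ ⊕ (U₁^⊥)″` and `V₂ = U₂ ⊕ (U₂^⊥)″`. The primed parts of `V₁ ↔ V₂` form the
subspace `A` of `P`-parts of vectors in `W := U₁ ∩ (U₂ × F_P)`. A vector `g` on `P` lies in
`A^⊥` iff `(0, g) ∈ W^⊥`, and by nondegeneracy `W^⊥ = U₁^⊥ + (U₂^⊥ × 0)`. Hence `g ∈ A^⊥` iff
`(f, g) ∈ U₁^⊥` for some `f ∈ U₂^⊥`, which says exactly that `g` is a double-primed part of
`V₁ ↔ V₂`. So `V₁ ↔ V₂ = A ⊕ (A^⊥)″`.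
-/

noncomputable section

open scoped BigOperators

/-- Dot product of two vectors indexed by a finite type. -/
def dotProd {F X : Type*} [Field F] [Fintype X] (f g : X → F) : F :=
  ∑ x, f x * g x

/-- Dot product on `F_{S∪P}` (encoded as pairs). -/
def dotM {F S P : Type*} [Field F] [Fintype S] [Fintype P]
    (x y : (S → F) × (P → F)) : F :=
  dotProd x.1 y.1 + dotProd x.2 y.2

/-- Matched composition of `V₁ ⊆ F_{S′∪P′∪S″∪P″}` (primed copy first) with
`V₂ ⊆ F_{S′∪S″}` over the shared index set `S′∪S″`; a subset of `F_{P′∪P″}`. -/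
def portComp {F S P : Type*} [Field F]
    (V₁ : Set (((S → F) × (P → F)) × ((S → F) × (P → F))))
    (V₂ : Set ((S → F) × (S → F))) : Set ((P → F) × (P → F)) :=
  {z | ∃ f₁ f₂ : S → F, ((f₁, z.1), (f₂, z.2)) ∈ V₁ ∧ (f₁, f₂) ∈ V₂}

open LinearMap (BilinForm SeparatingLeft SeparatingRight fst snd)

namespace LinearMap.BilinForm

lemma orthogonal_sup {R M : Type*} [CommSemiring R] [AddCommMonoid M] [Module R M]
    (B : BilinForm R M) (W₁ W₂ : Submodule R M) :
    B.orthogonal (W₁ ⊔ W₂) = B.orthogonal W₁ ⊓ B.orthogonal W₂ := by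
  refine le_antisymm (le_inf (B.orthogonal_le le_sup_left) (B.orthogonal_le le_sup_right)) ?_
  rintro x ⟨h₁, h₂⟩ w hw
  obtain ⟨w₁, hw₁, w₂, hw₂, rfl⟩ := Submodule.mem_sup.mp hw
  simp [h₁ w₁ hw₁, h₂ w₂ hw₂]

lemma orthogonal_inf {K V : Type*} [Field K] [AddCommGroup V] [Module K V]
    [FiniteDimensional K V] {B : BilinForm K V} (hB : B.Nondegenerate) (hB₀ : B.IsRefl)
    (W₁ W₂ : Submodule K V) :
    B.orthogonal (W₁ ⊓ W₂) = B.orthogonal W₁ ⊔ B.orthogonal W₂ := by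
  conv_lhs => rw [← B.orthogonal_orthogonal hB hB₀ W₁, ← B.orthogonal_orthogonal hB hB₀ W₂]
  rw [← orthogonal_sup, B.orthogonal_orthogonal hB hB₀]

section Prod

variable {R M N : Type*} [CommSemiring R] [AddCommMonoid M] [Module R M] [AddCommMonoid N]
  [Module R N]

def prod (B₁ : BilinForm R M) (B₂ : BilinForm R N) : BilinForm R (M × N) :=
  B₁.comp (fst R M N) (fst R M N) + B₂.comp (snd R M N) (snd R M N)

@[simp] lemma prod_apply (B₁ : BilinForm R M) (B₂ : BilinForm R N) (x y : M × N) :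
    B₁.prod B₂ x y = B₁ x.1 y.1 + B₂ x.2 y.2 := rfl

variable {B₁ : BilinForm R M} {B₂ : BilinForm R N}

lemma IsSymm.prod (h₁ : B₁.IsSymm) (h₂ : B₂.IsSymm) : (B₁.prod B₂).IsSymm :=
  ⟨fun x y => by simp [h₁.eq x.1, h₂.eq x.2]⟩

lemma separatingLeft_prod (h₁ : SeparatingLeft B₁) (h₂ : SeparatingLeft B₂) :
    SeparatingLeft (B₁.prod B₂) := fun x hx =>
  Prod.ext (h₁ x.1 fun y => by simpa using hx (y, 0)) (h₂ x.2 fun y => by simpa using hx (0, y))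

lemma separatingRight_prod (h₁ : SeparatingRight B₁) (h₂ : SeparatingRight B₂) :
    SeparatingRight (B₁.prod B₂) := fun y hy =>
  Prod.ext (h₁ y.1 fun x => by simpa using hy (x, 0)) (h₂ y.2 fun x => by simpa using hy (0, x))

lemma Nondegenerate.prod (h₁ : B₁.Nondegenerate) (h₂ : B₂.Nondegenerate) :
    (B₁.prod B₂).Nondegenerate :=
  ⟨separatingLeft_prod h₁.1 h₂.1, separatingRight_prod h₁.2 h₂.2⟩

lemma orthogonal_prod_top (h₂ : SeparatingRight B₂) (U : Submodule R M) :
    (B₁.prod B₂).orthogonal (U.prod ⊤) = (B₁.orthogonal U).prod ⊥ := by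
  ext ⟨a, b⟩
  simp only [mem_orthogonal_iff, Submodule.mem_prod, Submodule.mem_top, and_true,
    Submodule.mem_bot, Prod.forall, prod_apply]
  constructor
  · intro h
    exact ⟨fun u hu => by simpa using h u 0 hu, h₂ b fun v => by simpa using h 0 v U.zero_mem⟩
  · rintro ⟨h, rfl⟩ u v hu
    simp [h u hu]

lemma mem_orthogonal_map_snd_iff (W : Submodule R (M × N)) (g : N) :
    g ∈ B₂.orthogonal (W.map (snd R M N)) ↔ ((0 : M), g) ∈ (B₁.prod B₂).orthogonal W := by
  simpa [mem_orthogonal_iff] using forall_comm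

end Prod

end LinearMap.BilinForm

lemma Submodule.mk_zero_mem_sup_prod_bot_iff {R M N : Type*} [Ring R] [AddCommGroup M]
    [Module R M] [AddCommGroup N] [Module R N] (W : Submodule R (M × N)) (U : Submodule R M)
    (g : N) : ((0 : M), g) ∈ W ⊔ U.prod ⊥ ↔ ∃ f ∈ U, (f, g) ∈ W := by
  simp only [Submodule.mem_sup, Submodule.mem_prod, Submodule.mem_bot, Prod.exists]
  constructor
  · rintro ⟨f, g', hW, c, _, ⟨hc, rfl⟩, hsum⟩
    obtain ⟨rfl, rfl⟩ : f = -c ∧ g' = g := by simpa [add_eq_zero_iff_eq_neg] using hsum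
    exact ⟨-c, neg_mem hc, hW⟩
  · rintro ⟨f, hf, hW⟩
    exact ⟨f, g, hW, -f, 0, ⟨neg_mem hf, rfl⟩, by simp⟩

open LinearMap.BilinForm

section IdealTransformer

/-- The ideal transformer `U ⊕ (U^⊥)″`, as a set of pairs (primed part, double-primed part). -/
def idealTransformer {R M : Type*} [CommRing R] [AddCommGroup M] [Module R M]
    (B : BilinForm R M) (U : Submodule R M) : Set (M × M) :=
  {z | z.1 ∈ U ∧ z.2 ∈ B.orthogonal U}

variable {F S P : Type*} [Field F] [Fintype S] [Fintype P]

theorem portComp_idealTransformer {BS : BilinForm F (S → F)} {BP : BilinForm F (P → F)}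
    (hS : BS.Nondegenerate) (hP : BP.Nondegenerate) (hsS : BS.IsSymm) (hsP : BP.IsSymm)
    (U₁ : Submodule F ((S → F) × (P → F))) (U₂ : Submodule F (S → F)) :
    portComp (idealTransformer (BS.prod BP) U₁) (idealTransformer BS U₂) =
      idealTransformer BP ((U₁ ⊓ U₂.prod ⊤).map (snd F (S → F) (P → F))) := by
  have key : ∀ g, g ∈ BP.orthogonal ((U₁ ⊓ U₂.prod ⊤).map (snd F (S → F) (P → F))) ↔
      ∃ f ∈ BS.orthogonal U₂, (f, g) ∈ (BS.prod BP).orthogonal U₁ := fun g => by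
    rw [mem_orthogonal_map_snd_iff (B₁ := BS),
      orthogonal_inf (hS.prod hP) (hsS.prod hsP).isRefl, orthogonal_prod_top hP.2,
      Submodule.mk_zero_mem_sup_prod_bot_iff]
  ext ⟨g₁, g₂⟩
  simp only [portComp, idealTransformer, key, Submodule.mem_map, Submodule.mem_inf,
    Submodule.mem_prod, Submodule.mem_top, and_true, LinearMap.snd_apply, Prod.exists]
  constructor
  · rintro ⟨f₁, f₂, ⟨hU₁, hf₂⟩, hU₂, hf₂'⟩
    exact ⟨⟨f₁, g₁, ⟨hU₁, hU₂⟩, rfl⟩, f₂, hf₂', hf₂⟩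
  · rintro ⟨⟨f₁, _, ⟨hU₁, hU₂⟩, rfl⟩, f₂, hf₂', hf₂⟩
    exact ⟨f₁, f₂, ⟨hU₁, hf₂⟩, hU₂, hf₂'⟩

end IdealTransformer

section DotProduct

variable {F X : Type*} [Field F] [Fintype X]

lemma dotProductBilin_isSymm : BilinForm.IsSymm (dotProductBilin F F : BilinForm F (X → F)) :=
  ⟨dotProduct_comm⟩

lemma dotProductBilin_nondegenerate :
    (dotProductBilin F F : BilinForm F (X → F)).Nondegenerate := by
  classical
  refine (dotProductBilin_isSymm (F := F) (X := X)).isRefl.nondegenerate_iff_separatingLeft.mpr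
    fun f hf => ?_
  funext x
  simpa using hf (Pi.single x 1)

end DotProduct

/-- If `V₁` is an ideal transformer w.r.t. the copies `S′∪P′` and `S″∪P″`, and
`V₂` is an ideal transformer w.r.t. the copies `S′` and `S″`, then `V₁ ↔ V₂`
is an ideal transformer w.r.t. the copies `P′` and `P″`. -/
theorem stmt8 (F S P : Type*) [Field F] [Fintype S] [Fintype P]
    (V₁ : Set (((S → F) × (P → F)) × ((S → F) × (P → F))))
    (V₂ : Set ((S → F) × (S → F)))
    (h₁ : ∃ U : Submodule F ((S → F) × (P → F)),
        V₁ = {z | z.1 ∈ U ∧ ∀ u ∈ U, dotM u z.2 = 0})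
    (h₂ : ∃ U : Submodule F (S → F),
        V₂ = {z | z.1 ∈ U ∧ ∀ u ∈ U, dotProd u z.2 = 0}) :
    ∃ U : Submodule F (P → F),
      portComp V₁ V₂ = {z | z.1 ∈ U ∧ ∀ u ∈ U, dotProd u z.2 = 0} := by
  obtain ⟨U₁, rfl⟩ := h₁
  obtain ⟨U₂, rfl⟩ := h₂
  -- `dotProd` and `dotM` unfold to `dotProductBilin F F` and its `prod` with itself.
  exact ⟨_, portComp_idealTransformer dotProductBilin_nondegenerate dotProductBilin_nondegenerate
    dotProductBilin_isSymm dotProductBilin_isSymm U₁ U₂⟩
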